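/- Let G = ℤ/pℤ for p prime. Any permutation I of Irr(G) such that for all m, n ∈ ℤ/pℤ with m ≠ 0 and n ≠ 0, the sum Σ_{r=0}^{p−1} I(χ_r)(m) χ_r(n) lies in p·ℤ[ζ], is of the form χ ↦ λ·(χ∘σ) for some linear character λ ∈ Irr(G) and some automorphism σ of G. -/

import Mathlib

/-!
Put `n = f 0 - f 1` and `g r = f r + r n`. Then `∑_r χ_{f r}(1) χ_r(n) = ∑_r ζ^{g r}`, and
`g 0 = g 1`. Writing this sum as `Q(ζ)` with `Q = ∑_r X^{g r} ∈ ℤ[X]` of degree `< p`, divisibility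
by `p` in `ℤ[ζ]` says that `Q - p P` is divisible by `Φ_p = 1 + X + ⋯ + X^{p-1}` for some `P` of
degree `< p - 1`, hence is a constant multiple of `Φ_p`: all fibres of `g` have the same
cardinality mod `p`. Since `g` is not injective it is not surjective, so some fibre is empty and
the fibre of `g 0`, of size between `2` and `p`, has exactly `p` elements. Thus `g` is constant,
i.e. `f r = f 0 + r (f 1 - f 0)`.
-/

/-- The character `χ_a(b) = ζ^(ab)` of `ℤ/pℤ`. -/
noncomputable def chi (p : ℕ) (ζ : ℂ) (a b : ZMod p) : ℂ := ζ ^ (a * b).val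

open Polynomial Finset

lemma pow_val_add {M : Type*} [Monoid M] {n : ℕ} [NeZero n] {ζ : M} (hζ : ζ ^ n = 1)
    (x y : ZMod n) : ζ ^ (x + y).val = ζ ^ x.val * ζ ^ y.val := by
  rw [ZMod.val_add, ← pow_eq_pow_mod _ hζ, pow_add]

lemma Polynomial.coeff_eq_coeff_zero_of_cyclotomic_dvd {R : Type*} [CommRing R] {p : ℕ}
    [Fact p.Prime] {Q : R[X]} (hdvd : cyclotomic p R ∣ Q) (hdeg : Q.degree < p) {j : ℕ} (hj : j < p) :
    Q.coeff j = Q.coeff 0 := by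
  nontriviality R
  obtain ⟨T, rfl⟩ := hdvd
  have hT : T = C (T.coeff 0) := by
    rcases eq_or_ne T 0 with rfl | hT0
    · simp
    refine eq_C_of_natDegree_eq_zero ?_
    have hlt :=
      (natDegree_lt_iff_degree_lt ((cyclotomic.monic p R).mul_right_ne_zero hT0)).mpr hdeg
    rw [(cyclotomic.monic p R).natDegree_mul' hT0, natDegree_cyclotomic,
      Nat.totient_prime Fact.out] at hlt
    omega
  rw [hT, cyclotomic_prime]
  simp [coeff_mul_C, finsetSum_coeff, coeff_X_pow, hj, (Fact.out : p.Prime).pos]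

lemma IsPrimitiveRoot.coeff_modEq_of_aeval_div_mem_adjoin {K : Type*} [Field K] [CharZero K]
    {p : ℕ} [Fact p.Prime] {ζ : K} (hζ : IsPrimitiveRoot ζ p) {Q : ℤ[X]} (hdeg : Q.degree < p)
    (hQ : aeval ζ Q / p ∈ Algebra.adjoin ℤ ({ζ} : Set K)) {j : ℕ} (hj : j < p) :
    Q.coeff j ≡ Q.coeff 0 [ZMOD p] := by
  have hp : 0 < p := (Fact.out : p.Prime).pos
  rw [Algebra.adjoin_singleton_eq_range_aeval] at hQ
  obtain ⟨P, hP⟩ := hQ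
  -- reducing `P` modulo `Φ_p` keeps `deg R < p`, so `R` is a constant multiple of `Φ_p`
  set R := Q - C (p : ℤ) * (P %ₘ minpoly ℤ ζ)
  have hR : aeval ζ R = 0 := by
    have : aeval ζ Q = p * aeval ζ P := by
      rw [show aeval ζ P = aeval ζ Q / p from hP, mul_div_cancel₀ _ (by exact_mod_cast hp.ne')]
    simp [R, aeval_modByMonic_eq_self_of_root (minpoly.aeval ℤ ζ), this]
  have hRdeg : R.degree < p := by
    refine (degree_sub_le _ _).trans_lt (max_lt hdeg ?_)
    rw [degree_C_mul (by exact_mod_cast hp.ne')]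
    refine (degree_modByMonic_lt _ (minpoly.monic (hζ.isIntegral hp))).trans_le ?_
    rw [← cyclotomic_eq_minpoly hζ hp, degree_cyclotomic]
    exact_mod_cast Nat.totient_le p
  have hRcoeff := coeff_eq_coeff_zero_of_cyclotomic_dvd
    (cyclotomic_eq_minpoly hζ hp ▸ minpoly.isIntegrallyClosed_dvd (hζ.isIntegral hp) hR) hRdeg hj
  simp only [R, coeff_sub, coeff_C_mul] at hRcoeff
  exact Int.modEq_iff_dvd.mpr ⟨(P %ₘ minpoly ℤ ζ).coeff 0 - (P %ₘ minpoly ℤ ζ).coeff j,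
    by linear_combination -hRcoeff⟩

lemma Polynomial.coeff_sum_X_pow_val {ι : Type*} [Fintype ι] {n : ℕ} [NeZero n]
    (g : ι → ZMod n) (k : ZMod n) :
    (∑ i, (X : ℤ[X]) ^ (g i).val).coeff k.val = #{i | g i = k} := by
  simp [finsetSum_coeff, coeff_X_pow, ZMod.val_injective n |>.eq_iff, eq_comm]

lemma eq_of_card_fiber_modEq {ι κ : Type*} [Fintype ι] [Fintype κ] [DecidableEq κ] {g : ι → κ}
    (hcard : Fintype.card ι = Fintype.card κ)
    (hmod : ∀ k k', #{i | g i = k} ≡ #{i | g i = k'} [MOD Fintype.card κ])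
    {i₀ i₁ : ι} (hne : i₀ ≠ i₁) (heq : g i₀ = g i₁) (i : ι) : g i = g i₀ := by
  obtain ⟨k, hk⟩ : ∃ k, ∀ j, g j ≠ k := by
    by_contra! hsurj
    exact hne (((Fintype.bijective_iff_surjective_and_card g).mpr
      ⟨fun k => (hsurj k).imp fun _ => id, hcard⟩).injective heq)
  have hdvd : Fintype.card κ ∣ #{j | g j = g i₀} := by
    refine Nat.modEq_zero_iff_dvd.mp ((hmod _ k).trans ?_)
    simp [hk, Nat.ModEq.refl]
  have hpos : 0 < #{j | g j = g i₀} := card_pos.mpr ⟨i₀, by simp⟩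
  have hfull : #{j | g j = g i₀} = #(univ : Finset ι) :=
    le_antisymm (card_filter_le _ _) (by simpa [hcard] using Nat.le_of_dvd hpos hdvd)
  exact filter_card_eq hfull i (mem_univ i)

theorem IsPrimitiveRoot.eq_of_sum_pow_val_div_mem_adjoin {K : Type*} [Field K] [CharZero K]
    {p : ℕ} [Fact p.Prime] {ζ : K} (hζ : IsPrimitiveRoot ζ p) {ι : Type*} [Fintype ι]
    {g : ι → ZMod p} (hcard : Fintype.card ι = p)
    (hsum : (∑ i, ζ ^ (g i).val) / p ∈ Algebra.adjoin ℤ ({ζ} : Set K))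
    {i₀ i₁ : ι} (hne : i₀ ≠ i₁) (heq : g i₀ = g i₁) (i : ι) : g i = g i₀ := by
  set Q : ℤ[X] := ∑ i, X ^ (g i).val
  have hdeg : Q.degree < p := by
    refine (degree_sum_le _ _).trans_lt ((Finset.sup_lt_iff (WithBot.bot_lt_coe p)).mpr ?_)
    intro i _
    rw [degree_X_pow]
    exact WithBot.coe_lt_coe.mpr (g i).val_lt
  have hQ : aeval ζ Q = ∑ i, ζ ^ (g i).val := by simp [Q]
  have hmod (k : ZMod p) : #{i | g i = k} ≡ #{i | g i = 0} [ZMOD p] := by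
    have h := hζ.coeff_modEq_of_aeval_div_mem_adjoin hdeg (hQ ▸ hsum) k.val_lt
    rwa [← ZMod.val_zero, coeff_sum_X_pow_val, coeff_sum_X_pow_val] at h
  refine eq_of_card_fiber_modEq (by rw [hcard, ZMod.card]) (fun k k' => ?_) hne heq i
  rw [ZMod.card, ← Int.natCast_modEq_iff]
  exact (hmod k).trans (hmod k').symm

/-- A permutation `I` of `Irr(ℤ/pℤ)` such that `∑_r I(χ_r)(m) χ_r(n) ∈ p·ℤ[ζ]` for all
nonzero `m, n` is of the form `χ ↦ λ·(χ∘σ)` for a linear character `λ` and an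
automorphism `σ` (multiplication by a unit `u`). -/
theorem perfect_perm_is_affine (p : ℕ) [Fact p.Prime] (ζ : ℂ)
    (hζ : IsPrimitiveRoot ζ p) (f : Equiv.Perm (ZMod p))
    (h : ∀ m n : ZMod p, m ≠ 0 → n ≠ 0 →
      (∑ r : ZMod p, chi p ζ (f r) m * chi p ζ r n) / (p : ℂ)
        ∈ Algebra.adjoin ℤ ({ζ} : Set ℂ)) :
    ∃ (a : ZMod p) (u : (ZMod p)ˣ), ∀ (r h : ZMod p),
      chi p ζ (f r) h = chi p ζ a h * chi p ζ r ((u : ZMod p) * h) := by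
  have h01 : (0 : ZMod p) ≠ 1 := zero_ne_one
  have hn : f 0 - f 1 ≠ 0 := sub_ne_zero.mpr (f.injective.ne h01)
  have hsum := h 1 (f 0 - f 1) one_ne_zero hn
  simp only [chi, mul_one, ← pow_val_add hζ.pow_eq_one] at hsum
  have hconst := hζ.eq_of_sum_pow_val_div_mem_adjoin (ZMod.card p) hsum h01 (by ring)
  refine ⟨f 0, Units.mk0 _ (sub_ne_zero.mpr (f.injective.ne h01.symm)), fun r h => ?_⟩
  have haffine : f r * h = f 0 * h + r * ((f 1 - f 0) * h) := by
    linear_combination h * hconst r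
  simp only [chi, Units.val_mk0, haffine, pow_val_add hζ.pow_eq_one]
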